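/- arXiv:1210.4302 — 5 statements merged into one kernel-verified Lean document; each statement's English description precedes it below -/
import Mathlib

section
/- Let K be a poset and 𝔅 = (B, j) a net bundle over K (i.e. each j_{o'o} : B_o → B_{o'} for o ≤ o' is an isomorphism and j_{o''o'} ∘ j_{o'o} = j_{o''o} for o ≤ o' ≤ o''). For a 1-simplex b = (∂₀b, ∂₁b; |b|) of K define Z(b) := j_{|b|,∂₀b}^{-1} ∘ j_{|b|,∂₁b}. Then for every 2-simplex c of K one has Z(∂₀c) ∘ Z(∂₂c) = Z(∂₁c). -/
/-- A 1-simplex of a poset: two faces and a support dominating both. -/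
structure Simplex1 (K : Type*) [Preorder K] where
  x0 : K
  x1 : K
  s : K
  h0 : x0 ≤ s
  h1 : x1 ≤ s

/-- A 2-simplex of a poset: three 1-simplex faces whose supports are dominated by
the support, satisfying the face identities `∂ₕ∂ₖc = ∂ₖ∂_{h+1}c` for `h ≥ k`. -/
structure Simplex2 (K : Type*) [Preorder K] where
  d0 : Simplex1 K
  d1 : Simplex1 K
  d2 : Simplex1 K
  s : K
  hs0 : d0.s ≤ s
  hs1 : d1.s ≤ s
  hs2 : d2.s ≤ s
  e00 : d0.x0 = d1.x0
  e01 : d0.x1 = d2.x0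
  e11 : d1.x1 = d2.x1

/-- The flat connection of a net bundle: `Z(b) := j_{|b|,∂₀b}⁻¹ ∘ j_{|b|,∂₁b}`. -/
def flatConn {K : Type*} [Preorder K] {B : K → Type*}
    (j : ∀ {o o' : K}, o ≤ o' → B o ≃ B o') (b : Simplex1 K) : B b.x1 ≃ B b.x0 :=
  (j b.h1).trans (j b.h0).symm

/-- The flat connection of a net bundle satisfies the 1-cocycle relation
`Z(∂₀c) ∘ Z(∂₂c) = Z(∂₁c)` on every 2-simplex `c`. -/
theorem flat_connection_cocycle {K : Type*} [Preorder K] (B : K → Type*)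
    (j : ∀ {o o' : K}, o ≤ o' → B o ≃ B o')
    (hnet : ∀ {o o' o'' : K} (h1 : o ≤ o') (h2 : o' ≤ o'') (v : B o),
      j h2 (j h1 v) = j (h1.trans h2) v)
    (c : Simplex2 K) (v : B c.d2.x1) :
    cast (congrArg B c.e00)
        ((flatConn j c.d0) (cast (congrArg B c.e01.symm) ((flatConn j c.d2) v)))
      = (flatConn j c.d1) (cast (congrArg B c.e11.symm) v) := by
  revert v
  obtain ⟨⟨a0,a1,s0,p0,q0⟩,⟨b0,b1,s1,p1,q1⟩,⟨c0,c1,s2,p2,q2⟩,s,hs0,hs1,hs2,e00,e01,e11⟩ := c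
  dsimp only at e00 e01 e11
  subst e00 e01 e11
  intro v
  simp only [cast_eq, flatConn, Equiv.trans_apply]
  apply (j (p0.trans hs0)).injective
  rw [← hnet p0 hs0, Equiv.apply_symm_apply, hnet q0 hs0,
      ← hnet p1 hs1, Equiv.apply_symm_apply, hnet q1 hs1,
      ← hnet p2 hs2, Equiv.apply_symm_apply, hnet q2 hs2]
end

section
/- Let C and C' be full subcategories of the category of Hilbert spaces (objects Hilbert spaces, arrows bounded linear maps) both containing ℂ as an object, and let R : C' → C be a faithful full linear *-functor with R(ℂ) = ℂ and R(f) = f for every f ∈ (ℂ, ℂ) ≅ ℂ. For an object H' of C', define R^{H'} : H' → R(H') by R^{H'}(v) := (R(v_•))(1), where v_• ∈ (ℂ, H') is the map λ ↦ λv. Then: (1) each R^{H'} is a unitary operator; (2) for every arrow f : H' → K' in C' one has R(f) = R^{K'} ∘ f ∘ (R^{H'})^{-1}. -/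
/-- Adjoin `ℂ` as a distinguished (identity) object to a family of Hilbert spaces. -/
def OExt {ι : Type} (A : ι → Type) : Option ι → Type
  | none => ℂ
  | some i => A i

noncomputable instance OExt.normedAddCommGroup {ι : Type} (A : ι → Type)
    [∀ i, NormedAddCommGroup (A i)] : ∀ x, NormedAddCommGroup (OExt A x)
  | none => inferInstanceAs (NormedAddCommGroup ℂ)
  | some i => inferInstanceAs (NormedAddCommGroup (A i))

noncomputable instance OExt.innerProductSpace {ι : Type} (A : ι → Type)
    [∀ i, NormedAddCommGroup (A i)] [∀ i, InnerProductSpace ℂ (A i)] :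
    ∀ x, InnerProductSpace ℂ (OExt A x)
  | none => inferInstanceAs (InnerProductSpace ℂ ℂ)
  | some i => inferInstanceAs (InnerProductSpace ℂ (A i))

instance OExt.completeSpace {ι : Type} (A : ι → Type)
    [∀ i, NormedAddCommGroup (A i)] [∀ i, CompleteSpace (A i)] :
    ∀ x, CompleteSpace (OExt A x)
  | none => inferInstanceAs (CompleteSpace ℂ)
  | some i => inferInstanceAs (CompleteSpace (A i))

/-!
Since `R` and `v ↦ v_•` are linear, so is `R^{H'}`. It is isometric because
`R(v_•)* R(v_•) = R(v_•* v_•) = v_•* v_•` (an endomorphism of `ℂ`, which `R` fixes), hence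
injective, and it is onto because every arrow `ℂ → R(H')` is `w_•` for `w` its value at `1`
and `R` is full. Naturality is functoriality applied to `f ∘ v_• = (f v)_•`.
-/

open ContinuousLinearMap

theorem ContinuousLinearMap.norm_apply_eq_of_adjoint_comp_self_eq {𝕜 E G K : Type*} [RCLike 𝕜]
    [NormedAddCommGroup E] [InnerProductSpace 𝕜 E] [CompleteSpace E]
    [NormedAddCommGroup G] [InnerProductSpace 𝕜 G] [CompleteSpace G]
    [NormedAddCommGroup K] [InnerProductSpace 𝕜 K] [CompleteSpace K]
    (u : E →L[𝕜] G) (s : E →L[𝕜] K) (h : adjoint u ∘L u = adjoint s ∘L s) (x : E) :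
    ‖u x‖ = ‖s x‖ := by
  rw [apply_norm_eq_sqrt_inner_adjoint_left, h, ← apply_norm_eq_sqrt_inner_adjoint_left]

section UnitaryImplementation

variable {ι ι' : Type} {A : ι → Type} {A' : ι' → Type}
  [∀ i, NormedAddCommGroup (A i)] [∀ i, InnerProductSpace ℂ (A i)]
  [∀ i, NormedAddCommGroup (A' i)] [∀ i, InnerProductSpace ℂ (A' i)]
  {F : ι' → ι}
  (R : ∀ X Y : Option ι',
    (OExt A' X →L[ℂ] OExt A' Y) → (OExt A (X.map F) →L[ℂ] OExt A (Y.map F)))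

noncomputable def unitaryImplementation (X : Option ι') (v : OExt A' X) : OExt A (X.map F) :=
  R none X (toSpanSingleton ℂ v) (1 : ℂ)

theorem map_unitaryImplementation
    (Rcomp : ∀ X Y Z (f : OExt A' X →L[ℂ] OExt A' Y) (g : OExt A' Y →L[ℂ] OExt A' Z),
      R X Z (g.comp f) = (R Y Z g).comp (R X Y f))
    {X Y : Option ι'} (f : OExt A' X →L[ℂ] OExt A' Y) (v : OExt A' X) :
    R X Y f (unitaryImplementation R X v) = unitaryImplementation R Y (f v) := by
  have h := congrArg (· (1 : ℂ)) (Rcomp none X Y (toSpanSingleton ℂ v) f)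
  exact h.symm.trans (congrArg (R none Y · (1 : ℂ)) (comp_toSpanSingleton f v))

theorem norm_apply_one_eq_of_starFunctor
    [∀ i, CompleteSpace (A i)] [∀ i, CompleteSpace (A' i)]
    (Rcomp : ∀ X Y Z (f : OExt A' X →L[ℂ] OExt A' Y) (g : OExt A' Y →L[ℂ] OExt A' Z),
      R X Z (g.comp f) = (R Y Z g).comp (R X Y f))
    (Rstar : ∀ X Y (f : OExt A' X →L[ℂ] OExt A' Y), R Y X (adjoint f) = adjoint (R X Y f))
    (Runit : ∀ f : OExt A' none →L[ℂ] OExt A' none, R none none f = f)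
    {X : Option ι'} (s : OExt A' none →L[ℂ] OExt A' X) :
    ‖R none X s (1 : ℂ)‖ = ‖s (1 : ℂ)‖ := by
  refine norm_apply_eq_of_adjoint_comp_self_eq _ _ ?_ _
  rw [← Rstar, ← Rcomp, Runit]
  rfl

theorem unitaryImplementation_surjective (X : Option ι') (Rfull : Function.Surjective (R none X)) :
    Function.Surjective (unitaryImplementation R X) := by
  intro w
  obtain ⟨g, hg⟩ := Rfull (toSpanSingleton ℂ w)
  refine ⟨g (1 : ℂ), ?_⟩
  have hg1 : toSpanSingleton ℂ (g (1 : ℂ)) = g := ext_ring (toSpanSingleton_apply_one ℂ _)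
  rw [unitaryImplementation, hg1, hg]
  exact toSpanSingleton_apply_one ℂ w

theorem unitaryImplementation_add (Radd : ∀ X Y f g, R X Y (f + g) = R X Y f + R X Y g)
    {X : Option ι'} (v w : OExt A' X) :
    unitaryImplementation R X (v + w) = unitaryImplementation R X v + unitaryImplementation R X w :=
  (congrArg (R none X · (1 : ℂ)) (toSpanSingleton_add ℂ v w)).trans
    (congrArg (· (1 : ℂ)) (Radd none X _ _))

theorem unitaryImplementation_smul (Rsmul : ∀ X Y (c : ℂ) f, R X Y (c • f) = c • R X Y f)
    {X : Option ι'} (c : ℂ) (v : OExt A' X) :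
    unitaryImplementation R X (c • v) = c • unitaryImplementation R X v :=
  (congrArg (R none X · (1 : ℂ)) (toSpanSingleton_smul ℂ c v)).trans
    (congrArg (· (1 : ℂ)) (Rsmul none X c _))

noncomputable def unitaryImplementationₗᵢ
    [∀ i, CompleteSpace (A i)] [∀ i, CompleteSpace (A' i)]
    (Rfull : ∀ X Y, Function.Surjective (R X Y))
    (Radd : ∀ X Y f g, R X Y (f + g) = R X Y f + R X Y g)
    (Rsmul : ∀ X Y (c : ℂ) f, R X Y (c • f) = c • R X Y f)
    (Rcomp : ∀ X Y Z (f : OExt A' X →L[ℂ] OExt A' Y) (g : OExt A' Y →L[ℂ] OExt A' Z),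
      R X Z (g.comp f) = (R Y Z g).comp (R X Y f))
    (Rstar : ∀ X Y (f : OExt A' X →L[ℂ] OExt A' Y), R Y X (adjoint f) = adjoint (R X Y f))
    (Runit : ∀ f : OExt A' none →L[ℂ] OExt A' none, R none none f = f) (X : Option ι') :
    OExt A' X ≃ₗᵢ[ℂ] OExt A (X.map F) :=
  LinearIsometryEquiv.ofSurjective
    { toFun := unitaryImplementation R X
      map_add' := unitaryImplementation_add R Radd
      map_smul' := unitaryImplementation_smul R Rsmul
      norm_map' v := (norm_apply_one_eq_of_starFunctor R Rcomp Rstar Runit _).trans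
        (congrArg norm (toSpanSingleton_apply_one ℂ v)) }
    (unitaryImplementation_surjective R X (Rfull none X))

end UnitaryImplementation

theorem embedding_functor_unitary_implementation_general
    {ι ι' : Type} (A : ι → Type) (A' : ι' → Type)
    [∀ i, NormedAddCommGroup (A i)] [∀ i, InnerProductSpace ℂ (A i)]
    [∀ i, CompleteSpace (A i)]
    [∀ i, NormedAddCommGroup (A' i)] [∀ i, InnerProductSpace ℂ (A' i)]
    [∀ i, CompleteSpace (A' i)]
    (F : ι' → ι)
    (R : ∀ X Y : Option ι',
      (OExt A' X →L[ℂ] OExt A' Y) → (OExt A (X.map F) →L[ℂ] OExt A (Y.map F)))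
    (Radd : ∀ X Y f g, R X Y (f + g) = R X Y f + R X Y g)
    (Rsmul : ∀ X Y (c : ℂ) f, R X Y (c • f) = c • R X Y f)
    (Rcomp : ∀ X Y Z (f : OExt A' X →L[ℂ] OExt A' Y) (g : OExt A' Y →L[ℂ] OExt A' Z),
      R X Z (g.comp f) = (R Y Z g).comp (R X Y f))
    (Rstar : ∀ X Y (f : OExt A' X →L[ℂ] OExt A' Y),
      R Y X (ContinuousLinearMap.adjoint f) = ContinuousLinearMap.adjoint (R X Y f))
    (Rfull : ∀ X Y, Function.Surjective (R X Y))
    (Runit : ∀ f : OExt A' none →L[ℂ] OExt A' none, R none none f = f) :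
    (∀ X : Option ι',
      (∀ v w : OExt A' X,
        R none X (ContinuousLinearMap.toSpanSingleton ℂ (v + w)) (1 : ℂ)
          = R none X (ContinuousLinearMap.toSpanSingleton ℂ v) (1 : ℂ)
            + R none X (ContinuousLinearMap.toSpanSingleton ℂ w) (1 : ℂ))
      ∧ (∀ (c : ℂ) (v : OExt A' X),
        R none X (ContinuousLinearMap.toSpanSingleton ℂ (c • v)) (1 : ℂ)
          = c • R none X (ContinuousLinearMap.toSpanSingleton ℂ v) (1 : ℂ))
      ∧ Function.Bijective
          (fun v : OExt A' X => R none X (ContinuousLinearMap.toSpanSingleton ℂ v) (1 : ℂ))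
      ∧ (∀ v : OExt A' X,
        ‖R none X (ContinuousLinearMap.toSpanSingleton ℂ v) (1 : ℂ)‖ = ‖v‖))
    ∧ (∀ (X Y : Option ι') (f : OExt A' X →L[ℂ] OExt A' Y) (v : OExt A' X),
        R X Y f (R none X (ContinuousLinearMap.toSpanSingleton ℂ v) (1 : ℂ))
          = R none Y (ContinuousLinearMap.toSpanSingleton ℂ (f v)) (1 : ℂ)) := by
  let U := unitaryImplementationₗᵢ R Rfull Radd Rsmul Rcomp Rstar Runit
  exact ⟨fun X => ⟨(U X).map_add, (U X).map_smul, (U X).bijective, (U X).norm_map⟩,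
    fun _ _ => map_unitaryImplementation R Rcomp⟩

/-- Let `R` be a faithful full linear *-functor between full subcategories of
`Hilb` containing `ℂ`, with `R(ℂ) = ℂ` and `R` the identity on `(ℂ, ℂ)`.
Define `R^{H'}(v) := (R(v_•))(1)`. Then each `R^{H'}` is a unitary
(bijective, linear, norm-preserving), and `R(f) = R^{K'} ∘ f ∘ (R^{H'})⁻¹`,
i.e. `R(f)(R^{H'}(v)) = R^{K'}(f v)` for every arrow `f : H' → K'`. -/
theorem embedding_functor_unitary_implementation
    {ι ι' : Type} (A : ι → Type) (A' : ι' → Type)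
    [∀ i, NormedAddCommGroup (A i)] [∀ i, InnerProductSpace ℂ (A i)]
    [∀ i, CompleteSpace (A i)]
    [∀ i, NormedAddCommGroup (A' i)] [∀ i, InnerProductSpace ℂ (A' i)]
    [∀ i, CompleteSpace (A' i)]
    (F : ι' → ι)
    (R : ∀ X Y : Option ι',
      (OExt A' X →L[ℂ] OExt A' Y) → (OExt A (X.map F) →L[ℂ] OExt A (Y.map F)))
    (Radd : ∀ X Y f g, R X Y (f + g) = R X Y f + R X Y g)
    (Rsmul : ∀ X Y (c : ℂ) f, R X Y (c • f) = c • R X Y f)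
    (Rid : ∀ X, R X X (ContinuousLinearMap.id ℂ _) = ContinuousLinearMap.id ℂ _)
    (Rcomp : ∀ X Y Z (f : OExt A' X →L[ℂ] OExt A' Y) (g : OExt A' Y →L[ℂ] OExt A' Z),
      R X Z (g.comp f) = (R Y Z g).comp (R X Y f))
    (Rstar : ∀ X Y (f : OExt A' X →L[ℂ] OExt A' Y),
      R Y X (ContinuousLinearMap.adjoint f) = ContinuousLinearMap.adjoint (R X Y f))
    (Rfull : ∀ X Y, Function.Surjective (R X Y))
    (Rfaithful : ∀ X Y, Function.Injective (R X Y))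
    (Runit : ∀ f : OExt A' none →L[ℂ] OExt A' none, R none none f = f) :
    (∀ X : Option ι',
      (∀ v w : OExt A' X,
        R none X (ContinuousLinearMap.toSpanSingleton ℂ (v + w)) (1 : ℂ)
          = R none X (ContinuousLinearMap.toSpanSingleton ℂ v) (1 : ℂ)
            + R none X (ContinuousLinearMap.toSpanSingleton ℂ w) (1 : ℂ))
      ∧ (∀ (c : ℂ) (v : OExt A' X),
        R none X (ContinuousLinearMap.toSpanSingleton ℂ (c • v)) (1 : ℂ)
          = c • R none X (ContinuousLinearMap.toSpanSingleton ℂ v) (1 : ℂ))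
      ∧ Function.Bijective
          (fun v : OExt A' X => R none X (ContinuousLinearMap.toSpanSingleton ℂ v) (1 : ℂ))
      ∧ (∀ v : OExt A' X,
        ‖R none X (ContinuousLinearMap.toSpanSingleton ℂ v) (1 : ℂ)‖ = ‖v‖))
    ∧ (∀ (X Y : Option ι') (f : OExt A' X →L[ℂ] OExt A' Y) (v : OExt A' X),
        R X Y f (R none X (ContinuousLinearMap.toSpanSingleton ℂ v) (1 : ℂ))
          = R none Y (ContinuousLinearMap.toSpanSingleton ℂ (f v)) (1 : ℂ)) :=
  embedding_functor_unitary_implementation_general A A' F R Radd Rsmul Rcomp Rstar Rfull Runit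
end

section
/- Let K be a poset, G a group, and (F, j, α) a G-gerbe of C*-algebras over K with respect to a G-gerbe (i, δ): that is, each F_o is a C*-algebra with a G-action α_o : G → aut(F_o), j_{o'o} : F_o → F_{o'} are *-monomorphisms for o ≤ o', and for all nested triples c: c₀ ≤ c₁ ≤ |c| and pairs b: b₀ ≤ |b|, g ∈ G: j_{|c|c₁} ∘ j_{c₁c₀} = α_{|c|}(δ_c) ∘ j_{|c|c₀} and j_{|b|b₀} ∘ α_{b₀}(g) = α_{|b|}(i_b(g)) ∘ j_{|b|b₀}, where each i_b ∈ aut(G). Then the fixed-point family A_o := F_o^{G} = {a ∈ F_o : α_o(g)(a) = a ∀g ∈ G} is stable under the maps j, and the restrictions of j to the fixed points satisfy the exact net relations j_{o''o'} ∘ j_{o'o} = j_{o''o} on A_{o} for all o ≤ o' ≤ o''. Hence (A, j) is a net of C*-algebras over K. -/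
/-- For a `G`-gerbe of C*-algebras `(F, j, α)` over a poset `K` (relations
(CON2)), the fixed-point family `A_o := F_o^G` is stable under the maps `j`,
and on fixed points the `j` satisfy the exact net relations; hence the fixed
points form a net of C*-algebras over `K`. -/
theorem gerbe_fixed_points_form_net {K : Type*} [Preorder K]
    {G : Type*} [Group G]
    (F : K → Type*) [∀ o, NormedRing (F o)] [∀ o, StarRing (F o)]
    [∀ o, CStarRing (F o)] [∀ o, NormedAlgebra ℂ (F o)]
    [∀ o, StarModule ℂ (F o)] [∀ o, CompleteSpace (F o)]
    (j : ∀ {o o' : K}, o ≤ o' → F o →⋆ₐ[ℂ] F o')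
    (hinj : ∀ {o o' : K} (h : o ≤ o'), Function.Injective (j h))
    (i : ∀ {o o' : K}, o ≤ o' → G ≃* G)
    (δ : ∀ {o o' o'' : K}, o ≤ o' → o' ≤ o'' → G)
    (α : ∀ o : K, G →* (F o ≃ₐ[ℂ] F o))
    (hαstar : ∀ (o : K) (g : G) (a : F o), α o g (star a) = star (α o g a))
    (hδ : ∀ {o o' o'' : K} (h1 : o ≤ o') (h2 : o' ≤ o'') (a : F o),
      j h2 (j h1 a) = α o'' (δ h1 h2) (j (h1.trans h2) a))
    (hi : ∀ {o o' : K} (h : o ≤ o') (g : G) (a : F o),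
      j h (α o g a) = α o' (i h g) (j h a)) :
    (∀ {o o' : K} (h : o ≤ o') (a : F o),
      (∀ g : G, α o g a = a) → ∀ g' : G, α o' g' (j h a) = j h a)
    ∧ (∀ {o o' o'' : K} (h1 : o ≤ o') (h2 : o' ≤ o'') (a : F o),
      (∀ g : G, α o g a = a) → j h2 (j h1 a) = j (h1.trans h2) a) := by
  have stable : ∀ {o o' : K} (h : o ≤ o') (a : F o),
      (∀ g : G, α o g a = a) → ∀ g' : G, α o' g' (j h a) = j h a := by
    intro o o' h a ha g'
    have := hi h ((i h).symm g') a
    rw [ha, (i h).apply_symm_apply] at this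
    exact this.symm
  refine ⟨stable, ?_⟩
  intro o o' o'' h1 h2 a ha
  rw [hδ h1 h2 a, stable (h1.trans h2) a ha]
end

section
/- Let K be a poset, (A*, ρ, ε) a pointed C*-dynamical system (A* a unital C*-algebra, ρ ∈ end(A*), ε ∈ A*), and 𝔄 = (A, j) a C*-net bundle over K with A_a = A* for a fixed a ∈ K (all j_{o'o} *-isomorphisms). Suppose there exist an endomorphism ϱ of the net 𝔄 (a family ϱ_o ∈ end(A_o) with j_{o'o} ∘ ϱ_o = ϱ_{o'} ∘ j_{o'o}) with ϱ_a = ρ, and a section ξ of 𝔄 (j_{o'o}(ξ_o) = ξ_{o'}) with ξ_a = ε. Then for every loop γ = (b_n, …, b_1) at a, the holonomy automorphism Z(γ) := Z(b_n) ∘ ⋯ ∘ Z(b_1) ∈ aut(A*), where Z(b) := j_{|b|,∂₀b}^{-1} ∘ j_{|b|,∂₁b}, satisfies Z(γ) ∘ ρ = ρ ∘ Z(γ) and Z(γ)(ε) = ε. -/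
/-- A path in a poset: a composable finite sequence of 1-simplices. -/
inductive PPath {K : Type*} [Preorder K] : K → K → Type _ where
  | nil (a : K) : PPath a a
  | cons {a b : K} (p : PPath a b) (s : Simplex1 K) (h : s.x1 = b) : PPath a s.x0

variable {K : Type*} [Preorder K]

/-- Holonomy of a C*-net bundle along a path, `Z(b_n) ∘ ⋯ ∘ Z(b_1)`, where
`Z(b) := j_{|b|,∂₀b}⁻¹ ∘ j_{|b|,∂₁b}`. -/
def cstarHolonomy (A : K → Type*) [∀ o, NormedRing (A o)] [∀ o, StarRing (A o)]
    [∀ o, NormedAlgebra ℂ (A o)]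
    (j : ∀ {o o' : K}, o ≤ o' → A o ≃⋆ₐ[ℂ] A o') :
    ∀ {a b : K}, PPath a b → (A a → A b)
  | _, _, .nil _ => id
  | _, _, .cons p s h => fun x =>
      (j s.h0).symm (j s.h1 (cast (congrArg A h.symm) (cstarHolonomy A j p x)))

/-- If a C*-net bundle `𝔄` carries a net endomorphism `ϱ` and a section `ξ`,
then for every loop `γ` at `a` the holonomy automorphism `Z(γ)` commutes with
`ϱ_a` and fixes `ξ_a`. -/
theorem holonomy_commutes_with_endomorphism_and_fixes_section
    (A : K → Type*) [∀ o, NormedRing (A o)] [∀ o, StarRing (A o)]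
    [∀ o, CStarRing (A o)] [∀ o, NormedAlgebra ℂ (A o)]
    [∀ o, StarModule ℂ (A o)] [∀ o, CompleteSpace (A o)]
    (j : ∀ {o o' : K}, o ≤ o' → A o ≃⋆ₐ[ℂ] A o')
    (hnet : ∀ {o o' o'' : K} (h1 : o ≤ o') (h2 : o' ≤ o'') (x : A o),
      j h2 (j h1 x) = j (h1.trans h2) x)
    (ϱ : ∀ o : K, A o →⋆ₐ[ℂ] A o)
    (hϱ : ∀ {o o' : K} (h : o ≤ o') (x : A o), j h (ϱ o x) = ϱ o' (j h x))
    (ξ : ∀ o : K, A o)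
    (hξ : ∀ {o o' : K} (h : o ≤ o'), j h (ξ o) = ξ o')
    (a : K) (γ : PPath a a) :
    (∀ x : A a, cstarHolonomy A j γ (ϱ a x) = ϱ a (cstarHolonomy A j γ x))
    ∧ cstarHolonomy A j γ (ξ a) = ξ a := by
  suffices H : ∀ {b c : K} (γ : PPath b c),
      (∀ x : A b, cstarHolonomy A j γ (ϱ b x) = ϱ c (cstarHolonomy A j γ x))
      ∧ cstarHolonomy A j γ (ξ b) = ξ c from H γ
  intro b c γ
  induction γ with
  | nil =>
    refine ⟨fun x => ?_, ?_⟩ <;> simp only [cstarHolonomy] <;> rfl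
  | cons p s h ih =>
    subst h
    obtain ⟨ih1, ih2⟩ := ih
    constructor
    · intro x
      simp only [cstarHolonomy, cast_eq]
      rw [ih1, hϱ s.h1]
      generalize (j s.h1) (cstarHolonomy A j p x) = y
      conv_lhs => rw [← (j s.h0).apply_symm_apply y]
      rw [← hϱ s.h0, StarAlgEquiv.symm_apply_apply]
    · simp only [cstarHolonomy, cast_eq]
      rw [ih2, hξ s.h1, ← hξ s.h0, StarAlgEquiv.symm_apply_apply]
end

section
/- Let K be a poset, F an object of a category C, and χ : K(a) → aut(F) a map on loops at a ∈ K that (i) is invariant under homotopy of loops and (ii) satisfies χ(γ * γ') = χ(γ) ∘ χ(γ') for composable loops. Fix a path frame {γ_{ao} : o → a}_{o ∈ K} and, for o ≤ o', let b_{o'o} := (o', o; o') be the corresponding 1-simplex viewed as a path o → o'. Assume the deformation relation b_{o''o'} * b_{o'o} ∼ b_{o''o} holds for o ≤ o' ≤ o''. Define j_{o'o} := χ(γ_{ao'} * b_{o'o} * γ_{ao}^{-1}) ∈ aut(F). Then the family j satisfies the net relations j_{o''o'} ∘ j_{o'o} = j_{o''o} for all o ≤ o' ≤ o'', so (with all fibres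 equal to F) it defines a net bundle over K with holonomy χ. -/
/-- The reversed 1-simplex (faces exchanged). -/
def Simplex1.rev {K : Type*} [Preorder K] (b : Simplex1 K) : Simplex1 K :=
  ⟨b.x1, b.x0, b.s, b.h1, b.h0⟩

/-- Composition of paths: `p.comp q` is "first `p`, then `q`". -/
def PPath.comp {K : Type*} [Preorder K] :
    ∀ {a b c : K}, PPath a b → PPath b c → PPath a c
  | _, _, _, p, .nil _ => p
  | _, _, _, p, .cons q s h => .cons (p.comp q) s h

/-- Reversal of a path. -/
def PPath.reverse {K : Type*} [Preorder K] : ∀ {a b : K}, PPath a b → PPath b a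
  | _, _, .nil a => .nil a
  | _, _, .cons p s h =>
      PPath.comp (cast (congrArg (PPath s.x0) h)
        (PPath.cons (.nil s.x0) s.rev rfl)) p.reverse

/-- The 1-simplex `b_{o'o} := (o', o; o')`, regarded as a path `o → o'`. -/
def sPath {K : Type*} [Preorder K] {o o' : K} (h : o ≤ o') : PPath o o' :=
  PPath.cons (.nil o) ⟨o', o, o', le_rfl, h⟩ rfl

/-- Reconstruction of a net bundle from a homotopy-invariant multiplicative
map on loops: given a path frame `{γ_{ao}}`, the maps
`j_{o'o} := χ(γ_{ao'} * b_{o'o} * γ_{ao}⁻¹)` satisfy the net relations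
`j_{o''o'} ∘ j_{o'o} = j_{o''o}`. -/
theorem net_bundle_from_holonomy {K : Type*} [Preorder K] {F : Type*}
    (a : K) (χ : PPath a a → (F ≃ F))
    (Rel : ∀ {x y : K}, PPath x y → PPath x y → Prop)
    (hrefl : ∀ {x y : K} (p : PPath x y), Rel p p)
    (hsymm : ∀ {x y : K} (p q : PPath x y), Rel p q → Rel q p)
    (htrans : ∀ {x y : K} (p q r : PPath x y), Rel p q → Rel q r → Rel p r)
    (hcongr : ∀ {x y z : K} (p p' : PPath x y) (q q' : PPath y z),
      Rel p p' → Rel q q' → Rel (p.comp q) (p'.comp q'))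
    (hcancel : ∀ {x y : K} (p : PPath x y), Rel (p.comp p.reverse) (.nil x))
    (hcancel' : ∀ {x y : K} (p : PPath x y), Rel (p.reverse.comp p) (.nil y))
    (hnilcomp : ∀ {x y : K} (p : PPath x y), Rel ((PPath.nil x).comp p) p)
    (hassoc : ∀ {x y z w : K} (p : PPath x y) (q : PPath y z) (r : PPath z w),
      (p.comp q).comp r = p.comp (q.comp r))
    (hinv : ∀ p q : PPath a a, Rel p q → χ p = χ q)
    (hmul : ∀ (p q : PPath a a) (v : F), χ (p.comp q) v = χ q (χ p v))
    (frame : ∀ o : K, PPath o a)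
    (hdef : ∀ {o o' o'' : K} (h1 : o ≤ o') (h2 : o' ≤ o''),
      Rel ((sPath h1).comp (sPath h2)) (sPath (h1.trans h2))) :
    ∀ {o o' o'' : K} (h1 : o ≤ o') (h2 : o' ≤ o'') (v : F),
      χ (((frame o').reverse.comp (sPath h2)).comp (frame o''))
          (χ (((frame o).reverse.comp (sPath h1)).comp (frame o')) v)
        = χ (((frame o).reverse.comp (sPath (h1.trans h2))).comp (frame o'')) v := by
  intro o o' o'' h1 h2 v
  rw [← hmul]
  congr 1
  apply hinv
  set A := (frame o).reverse
  set B := sPath h1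
  set C := frame o'
  set E := sPath h2
  set G := frame o''
  have e1 : ((A.comp B).comp C).comp ((C.reverse.comp E).comp G)
      = (A.comp B).comp ((C.comp C.reverse).comp (E.comp G)) := by
    rw [hassoc, hassoc, hassoc, ← hassoc C C.reverse, ← hassoc A B]
  rw [e1]
  have r1 : Rel ((A.comp B).comp ((C.comp C.reverse).comp (E.comp G)))
      ((A.comp B).comp ((PPath.nil o').comp (E.comp G))) :=
    hcongr _ _ _ _ (hrefl _) (hcongr _ _ _ _ (hcancel C) (hrefl _))
  have r2 : Rel ((A.comp B).comp ((PPath.nil o').comp (E.comp G)))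
      ((A.comp B).comp (E.comp G)) :=
    hcongr _ _ _ _ (hrefl _) (hnilcomp _)
  have e2 : (A.comp B).comp (E.comp G) = (A.comp (B.comp E)).comp G := by
    rw [hassoc, hassoc, hassoc]
  have r3 : Rel ((A.comp (B.comp E)).comp G)
      ((A.comp (sPath (h1.trans h2))).comp G) :=
    hcongr _ _ _ _ (hcongr _ _ _ _ (hrefl _) (hdef h1 h2)) (hrefl _)
  have e3 : (A.comp (sPath (h1.trans h2))).comp G
      = (A.comp (sPath (h1.trans h2))).comp G := rfl
  exact htrans _ _ _ (htrans _ _ _ r1 r2) (e2 ▸ r3)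
end
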